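/- In the setting of the degree-4 computation: with e, e′ commuting idempotents, [D,e] commuting with e′ and [D,e′] commuting with e, the six 'cross terms' in the expansion of ([D,e]²e′ + e[D,e′]² + [D,e]ee′[D,e′] + [D,e′]ee′[D,e])² listed in the paper vanish; e.g. [D,e]²e′[D,e′]ee′[D,e] = 0 (using e′[D,e′]e′ = 0) and e[D,e′]²[D,e]ee′[D,e′] = 0 (using e[D,e]e = 0). -/
import Mathlib


/-- The commutator `[D,x] = Dx - xD`. -/
def dcomm {R : Type*} [Ring R] (D x : R) : R := D * x - x * D

/-- `e [D,e] e = 0` for an idempotent `e`. -/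
theorem sandwich_zero {R : Type*} [Ring R] (e D : R) (he : e * e = e) :
    e * dcomm D e * e = 0 := by
  have : e * dcomm D e * e = e * (D * e) * e - e * (e * D) * e := by
    simp [dcomm, mul_sub, sub_mul]
  rw [this]
  have h1 : e * (D * e) * e = e * D * e := by
    rw [mul_assoc e (D * e) e, mul_assoc D e e, he, ← mul_assoc]
  have h2 : e * (e * D) * e = e * D * e := by
    rw [← mul_assoc, he]
  rw [h1, h2, sub_self]

/-- The six cross terms in the expansion of
`([D,e]²e' + e[D,e']² + [D,e]ee'[D,e'] + [D,e']ee'[D,e])²` vanish. -/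
theorem six_cross_terms_vanish {R : Type*} [Ring R] [Invertible (2 : R)] (e e' D : R)
    (he : e * e = e) (he' : e' * e' = e') (hee' : e * e' = e' * e)
    (h1 : dcomm D e * e' = e' * dcomm D e) (h2 : dcomm D e' * e = e * dcomm D e') :
    dcomm D e * dcomm D e * e' * (dcomm D e' * e * e' * dcomm D e) = 0 ∧
    e * (dcomm D e' * dcomm D e') * (dcomm D e * e * e' * dcomm D e') = 0 ∧
    dcomm D e * e * e' * dcomm D e' * (dcomm D e * dcomm D e * e') = 0 ∧
    dcomm D e * e * e' * dcomm D e' * (dcomm D e * e * e' * dcomm D e') = 0 ∧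
    dcomm D e' * e * e' * dcomm D e * (e * (dcomm D e' * dcomm D e')) = 0 ∧
    dcomm D e' * e * e' * dcomm D e * (dcomm D e' * e * e' * dcomm D e) = 0 := by
  set a := dcomm D e with hadef
  set b := dcomm D e' with hbdef
  have hA : e * a * e = 0 := sandwich_zero e D he
  have hB : e' * b * e' = 0 := sandwich_zero e' D he'
  -- s1 : e' b e e' = 0
  have s1 : e' * b * e * e' = 0 := by
    calc e' * b * e * e' = e' * (b * e) * e' := by rw [mul_assoc e' b e]
      _ = e' * (e * b) * e' := by rw [h2]
      _ = (e' * e) * (b * e') := by noncomm_ring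
      _ = (e * e') * (b * e') := by rw [← hee']
      _ = e * (e' * b * e') := by noncomm_ring
      _ = 0 := by rw [hB, mul_zero]
  -- s2 : e b b a e = 0
  have hbb : e * (b * b) = (b * b) * e := by
    rw [← mul_assoc, ← h2, mul_assoc, ← h2, ← mul_assoc]
  have s2 : e * b * b * a * e = 0 := by
    calc e * b * b * a * e = (e * (b * b)) * (a * e) := by noncomm_ring
      _ = ((b * b) * e) * (a * e) := by rw [hbb]
      _ = (b * b) * (e * a * e) := by noncomm_ring
      _ = 0 := by rw [hA, mul_zero]
  -- s3 : e' b a a e' = 0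
  have haa : (a * a) * e' = e' * (a * a) := by
    rw [mul_assoc, h1, ← mul_assoc, h1, mul_assoc]
  have s3 : e' * b * a * a * e' = 0 := by
    calc e' * b * a * a * e' = (e' * b) * ((a * a) * e') := by noncomm_ring
      _ = (e' * b) * (e' * (a * a)) := by rw [haa]
      _ = (e' * b * e') * (a * a) := by noncomm_ring
      _ = 0 := by rw [hB, zero_mul]
  -- s4 : e' b a e e' = 0
  have s4 : e' * b * a * e * e' = 0 := by
    have key : a * (e * e') = e' * (a * e) := by
      rw [hee', ← mul_assoc, h1, mul_assoc]
    calc e' * b * a * e * e' = (e' * b) * (a * (e * e')) := by noncomm_ring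
      _ = (e' * b) * (e' * (a * e)) := by rw [key]
      _ = (e' * b * e') * (a * e) := by noncomm_ring
      _ = 0 := by rw [hB, zero_mul]
  -- s5 : e e' a e = 0
  have s5 : e * e' * a * e = 0 := by
    calc e * e' * a * e = e * (e' * a) * e := by rw [mul_assoc e e' a]
      _ = e * (a * e') * e := by rw [h1]
      _ = (e * a) * (e' * e) := by noncomm_ring
      _ = (e * a) * (e * e') := by rw [← hee']
      _ = (e * a * e) * e' := by noncomm_ring
      _ = 0 := by rw [hA, zero_mul]
  -- s6 : e e' a b e = 0
  have s6 : e * e' * a * b * e = 0 := by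
    calc e * e' * a * b * e = (e * e' * a) * (b * e) := by rw [mul_assoc]
      _ = (e * e' * a) * (e * b) := by rw [h2]
      _ = (e * e' * a * e) * b := by noncomm_ring
      _ = 0 := by rw [s5, zero_mul]
  refine ⟨?_, ?_, ?_, ?_, ?_, ?_⟩
  · calc a * a * e' * (b * e * e' * a) = a * a * (e' * b * e * e') * a := by noncomm_ring
      _ = 0 := by rw [s1, mul_zero, zero_mul]
  · calc e * (b * b) * (a * e * e' * b) = (e * b * b * a * e) * (e' * b) := by noncomm_ring
      _ = 0 := by rw [s2, zero_mul]
  · calc a * e * e' * b * (a * a * e') = (a * e) * (e' * b * a * a * e') := by noncomm_ring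
      _ = 0 := by rw [s3, mul_zero]
  · calc a * e * e' * b * (a * e * e' * b) = (a * e) * (e' * b * a * e * e') * b := by noncomm_ring
      _ = 0 := by rw [s4, mul_zero, zero_mul]
  · calc b * e * e' * a * (e * (b * b)) = b * (e * e' * a * e) * (b * b) := by noncomm_ring
      _ = 0 := by rw [s5, mul_zero, zero_mul]
  · calc b * e * e' * a * (b * e * e' * a) = b * (e * e' * a * b * e) * (e' * a) := by noncomm_ring
      _ = 0 := by rw [s6, mul_zero, zero_mul]
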